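/- Let M > 0 and 0 < a < M, and let r̂₁ = 2M(1 + cos((2/3) arccos(−a/M))), r̂₂ = 2M(1 + cos((2/3) arccos(a/M))). Then Q_trap(r) = −r³(r³ − 6Mr² + 9M²r − 4a²M)/(a²(r − M)²) satisfies Q_trap(r̂₁) = 0, Q_trap(r̂₂) = 0, and Q_trap(r) > 0 for all r ∈ (r̂₁, r̂₂). -/

import Mathlib

/-!
Both endpoints are the trigonometric (Viète) roots of the cubic
`p(r) = r³ - 6Mr² + 9M²r - 4a²M`: with `c = cos((2/3) arccos x)` the triple-angle formula gives
`4c³ - 3c = 2x² - 1`, which is exactly `p(2M(1 + c)) = 0` when `x² = (a/M)²`. Since `c > -1/2`,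
both roots lie beyond `r = M`, while `p(M) = 4M(M² - a²) > 0` forces the third root below `M`.
Hence `p < 0` strictly between `r̂₁` and `r̂₂`, and `Q_trap = -r³ p(r) / (a²(r - M)²) > 0` there.
-/

open Real

def photonOrbitCubic (M a r : ℝ) : ℝ := r^3 - 6*M*r^2 + 9*M^2*r - 4*a^2*M

lemma cos_two_thirds_arccos_triple {x : ℝ} (hx₁ : -1 ≤ x) (hx₂ : x ≤ 1) :
    4 * cos ((2/3) * arccos x) ^ 3 - 3 * cos ((2/3) * arccos x) = 2 * x^2 - 1 := by
  rw [← cos_three_mul, show 3 * ((2/3) * arccos x) = 2 * arccos x by ring, cos_two_mul,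
    cos_arccos hx₁ hx₂]

lemma neg_half_lt_cos_two_thirds_arccos {x : ℝ} (hx : -1 < x) :
    -(1/2) < cos ((2/3) * arccos x) := by
  have hcos : cos (2 * π / 3) = -(1/2) := by
    rw [show 2 * π / 3 = π - π / 3 by ring, cos_pi_sub, cos_pi_div_three]
  rw [← hcos]
  apply cos_lt_cos_of_nonneg_of_le_pi (by positivity [arccos_nonneg x]) (by linarith [pi_pos])
  linarith [arccos_lt_pi.mpr hx]

lemma photonOrbitCubic_two_mul_one_add_cos {M a c : ℝ} (hM : M ≠ 0)
    (hc : 4 * c^3 - 3 * c = 2 * (a/M)^2 - 1) :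
    photonOrbitCubic M a (2*M*(1 + c)) = 0 := by
  unfold photonOrbitCubic
  field_simp at hc
  linear_combination 2 * M * hc

lemma photonOrbitCubic_viete_root {M a x : ℝ} (hM : M ≠ 0) (hx₁ : -1 ≤ x) (hx₂ : x ≤ 1)
    (hxa : x^2 = (a/M)^2) :
    photonOrbitCubic M a (2*M*(1 + cos ((2/3) * arccos x))) = 0 :=
  photonOrbitCubic_two_mul_one_add_cos hM (by rw [cos_two_thirds_arccos_triple hx₁ hx₂, hxa])

/-- The roots of `p` sum to `6M`, so two distinct roots determine the third. -/
lemma photonOrbitCubic_eq_mul_of_roots {M a r₁ r₂ : ℝ} (h₁ : photonOrbitCubic M a r₁ = 0)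
    (h₂ : photonOrbitCubic M a r₂ = 0) (hne : r₁ ≠ r₂) (s : ℝ) :
    photonOrbitCubic M a s = (s - r₁) * (s - r₂) * (s - (6*M - r₁ - r₂)) := by
  unfold photonOrbitCubic at *
  have hquad : r₁^2 + r₁*r₂ + r₂^2 - 6*M*(r₁ + r₂) + 9*M^2 = 0 := by
    have h : (r₁ - r₂) * (r₁^2 + r₁*r₂ + r₂^2 - 6*M*(r₁ + r₂) + 9*M^2) = 0 := by
      linear_combination h₁ - h₂
    exact (mul_eq_zero.mp h).resolve_left (sub_ne_zero.mpr hne)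
  linear_combination (s - r₁) * hquad + h₁

lemma photonOrbitCubic_neg_of_mem_Ioo {M a r₁ r₂ r : ℝ} (hM : 0 < M) (haM : a^2 < M^2)
    (h₁ : photonOrbitCubic M a r₁ = 0) (h₂ : photonOrbitCubic M a r₂ = 0)
    (hMr₁ : M < r₁) (hr : r ∈ Set.Ioo r₁ r₂) :
    photonOrbitCubic M a r < 0 := by
  obtain ⟨hr₁, hr₂⟩ := hr
  have hfac := photonOrbitCubic_eq_mul_of_roots h₁ h₂ (by linarith)
  set r₀ := 6*M - r₁ - r₂
  have hr₀M : r₀ < M := by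
    have hpM : (M - r₁) * (M - r₂) * (M - r₀) = 4*M*(M^2 - a^2) := by
      rw [← hfac M, photonOrbitCubic]; ring
    have hpos : 0 < (M - r₁) * (M - r₂) := mul_pos_of_neg_of_neg (by linarith) (by linarith)
    by_contra! h
    nlinarith [mul_nonpos_of_nonneg_of_nonpos hpos.le (sub_nonpos.mpr h)]
  rw [hfac, mul_right_comm]
  exact mul_neg_of_pos_of_neg (mul_pos (by linarith) (by linarith)) (by linarith)

/-- `Q_trap` vanishes at the endpoints of the spherical photon orbit range
and is positive in its interior. -/
theorem kerr_Q_trap_sign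
    (M a : ℝ) (hM : 0 < M) (ha : 0 < a) (haM : a < M)
    (r₁ r₂ : ℝ)
    (hr₁ : r₁ = 2*M*(1 + Real.cos ((2/3) * Real.arccos (-a/M))))
    (hr₂ : r₂ = 2*M*(1 + Real.cos ((2/3) * Real.arccos (a/M))))
    (Qtrap : ℝ → ℝ)
    (hQ : ∀ r, Qtrap r = -(r^3 * (r^3 - 6*M*r^2 + 9*M^2*r - 4*a^2*M))
        / (a^2 * (r - M)^2)) :
    Qtrap r₁ = 0 ∧ Qtrap r₂ = 0 ∧ ∀ r ∈ Set.Ioo r₁ r₂, 0 < Qtrap r := by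
  have hQ' : ∀ r, Qtrap r = -(r^3 * photonOrbitCubic M a r) / (a^2 * (r - M)^2) := hQ
  have haM' : a / M < 1 := (div_lt_one hM).mpr haM
  have ha' : 0 < a / M := div_pos ha hM
  have hp₁ : photonOrbitCubic M a r₁ = 0 :=
    hr₁ ▸ photonOrbitCubic_viete_root hM.ne' (by rw [neg_div]; linarith) (by rw [neg_div]; linarith)
      (by ring)
  have hp₂ : photonOrbitCubic M a r₂ = 0 :=
    hr₂ ▸ photonOrbitCubic_viete_root hM.ne' (by linarith) haM'.le rfl
  have hMr₁ : M < r₁ := by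
    have := neg_half_lt_cos_two_thirds_arccos (x := -a/M) (by rw [neg_div]; linarith)
    rw [hr₁]; nlinarith
  refine ⟨by rw [hQ', hp₁]; simp, by rw [hQ', hp₂]; simp, fun r hr => ?_⟩
  have hMr : M < r := hMr₁.trans hr.1
  rw [hQ']
  apply div_pos
  · have := photonOrbitCubic_neg_of_mem_Ioo hM (by nlinarith) hp₁ hp₂ hMr₁ hr
    nlinarith [pow_pos (hM.trans hMr) 3]
  · have : r - M ≠ 0 := by linarith
    positivity
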